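/- For all integers k ≥ 3 and n ≥ 2, and any index i with 1 ≤ i ≤ n, the class of the divisor ε_i in the critical group K(H_{k,n}) has additive order exactly (k−1)·(k+n−1). -/

import Mathlib

/-- Vertex set of the hinge graph `H_{k,n}`: two shared vertices `u, w`
(encoded as `Sum.inl 0`, `Sum.inl 1`) together with the vertices
`v_{i,j}` (encoded as `Sum.inr (i, j)`, zero-indexed). -/
abbrev HingeVertex (k n : ℕ) : Type := Fin 2 ⊕ (Fin n × Fin (k - 2))

/-- The shared vertex `u`. -/
def hu (k n : ℕ) : HingeVertex k n := Sum.inl 0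

/-- The shared vertex `w`. -/
def hw (k n : ℕ) : HingeVertex k n := Sum.inl 1

/-- The vertex `v_{i+1,j+1}` of the `i+1`-st cycle (zero-indexed here). -/
def hv (k n : ℕ) (i : Fin n) (j : Fin (k - 2)) : HingeVertex k n := Sum.inr (i, j)

/-- The base (Boolean) edge relation of the hinge graph: `u-w`, `u-v_{i,1}`,
`v_{i,j}-v_{i,j+1}`, `v_{i,k-2}-w`. -/
def hingeRelB (k n : ℕ) : HingeVertex k n → HingeVertex k n → Bool
  | Sum.inl a, Sum.inl b => a != b
  | Sum.inl a, Sum.inr p => a == 0 && p.2.val == 0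
  | Sum.inr p, Sum.inl b => b == 1 && p.2.val == k - 3
  | Sum.inr p, Sum.inr q => p.1 == q.1 && q.2.val == p.2.val + 1

/-- The hinge graph `H_{k,n}`: `n` cycles of length `k` glued along the edge `{u, w}`. -/
def Hinge (k n : ℕ) : SimpleGraph (HingeVertex k n) :=
  SimpleGraph.fromRel (fun x y => hingeRelB k n x y = true)

instance (k n : ℕ) : DecidableRel (Hinge k n).Adj := fun x y =>
  inferInstanceAs (Decidable (x ≠ y ∧ (hingeRelB k n x y = true ∨ hingeRelB k n y x = true)))

/-- The number of spanning trees of a graph `G`: the number of edge sets `s ⊆ E(G)`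
whose associated spanning subgraph (on all of `V`) is connected and acyclic. -/
noncomputable def spanningTreeCount {V : Type*} (G : SimpleGraph V) : ℕ :=
  Set.ncard {s : Set (Sym2 V) | s ⊆ G.edgeSet ∧ (SimpleGraph.fromEdgeSet s).IsTree}

/-- The degree homomorphism on divisors. -/
def degHom (V : Type*) [Fintype V] : (V → ℤ) →+ ℤ where
  toFun D := ∑ v, D v
  map_zero' := by simp
  map_add' x y := by simp [Finset.sum_add_distrib]

/-- The group `Div⁰` of degree-zero divisors. -/
def Div0 (V : Type*) [Fintype V] : AddSubgroup (V → ℤ) := (degHom V).ker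

/-- The group of principal divisors: the image of the Laplacian `L = Deg - A`. -/
def Prin {V : Type*} [Fintype V] [DecidableEq V] (G : SimpleGraph V) [DecidableRel G.Adj] :
    AddSubgroup (V → ℤ) :=
  AddMonoidHom.range (Matrix.mulVecLin (G.lapMatrix ℤ)).toAddMonoidHom

/-- The critical group `K(G) = Div⁰(G) / Prin(G)`. -/
def CriticalGroup {V : Type*} [Fintype V] [DecidableEq V] (G : SimpleGraph V)
    [DecidableRel G.Adj] : Type _ :=
  Div0 V ⧸ ((Prin G).addSubgroupOf (Div0 V))

noncomputable instance {V : Type*} [Fintype V] [DecidableEq V] (G : SimpleGraph V)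
    [DecidableRel G.Adj] : AddCommGroup (CriticalGroup G) :=
  inferInstanceAs (AddCommGroup (Div0 V ⧸ ((Prin G).addSubgroupOf (Div0 V))))

/-- The class of a degree-zero divisor in the critical group. -/
def divisorClass {V : Type*} [Fintype V] [DecidableEq V] (G : SimpleGraph V)
    [DecidableRel G.Adj] (D : V → ℤ) (hD : D ∈ Div0 V) : CriticalGroup G :=
  (QuotientAddGroup.mk (⟨D, hD⟩ : Div0 V) :
    Div0 V ⧸ ((Prin G).addSubgroupOf (Div0 V)))

/-- The divisor with value `1` at `x`, `-1` at `y` (for `x ≠ y`) and `0` elsewhere. -/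
def pointDiff {V : Type*} [DecidableEq V] (x y : V) : V → ℤ :=
  fun z => (if z = x then 1 else 0) - (if z = y then 1 else 0)

lemma pointDiff_mem {V : Type*} [Fintype V] [DecidableEq V] (x y : V) :
    pointDiff x y ∈ Div0 V := by
  simp [Div0, AddMonoidHom.mem_ker, degHom, pointDiff, Finset.sum_sub_distrib]

/-!
A multiple `d • ε_i` is principal iff `d • ε_i = L x` for an integer potential `x`. Along each of
the `n` paths `u, v_{i',1}, …, v_{i',k-2}, w` the Laplacian is a second difference, so `x` is
affine along every path, except for a kink of size `d` at `v_{i,1}`. With `s = x u - x w` this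
gives `(k - 1) (x u - x v_{i',1}) = s + (k - 2) d [i' = i]`, while the Laplacian at `u` gives
`s + ∑ (x u - x v_{i',1}) = d`. Hence `d = (k + n - 1) s`, and `s` is a multiple of `k - 1`
since some `i' ≠ i` exists. Conversely, the potential of slope `1` along the other paths and
`-(k + n - 2)` along path `i` realises `d = (k - 1) (k + n - 1)`.
-/

open Finset Matrix SimpleGraph

section CriticalGroup

variable {V : Type*} [Fintype V] [DecidableEq V] (G : SimpleGraph V) [DecidableRel G.Adj]

theorem lapMatrix_mulVec_apply_eq_sum_sub {R : Type*} [NonAssocRing R] (x : V → R) (v : V) :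
    (G.lapMatrix R *ᵥ x) v = ∑ y ∈ G.neighborFinset v, (x v - x y) := by
  rw [lapMatrix_mulVec_apply, sum_sub_distrib, sum_const, card_neighborFinset_eq_degree,
    nsmul_eq_mul]

theorem sum_lapMatrix_mulVec {R : Type*} [CommRing R] (x : V → R) :
    ∑ v, (G.lapMatrix R *ᵥ x) v = 0 := by
  rw [← one_dotProduct, dotProduct_mulVec, ← mulVec_transpose, (isSymm_lapMatrix R G).eq,
    Pi.one_def, lapMatrix_mulVec_const_eq_zero, zero_dotProduct]

theorem lapMatrix_mulVec_eq_of_forall_ne {x D : V → ℤ} (hD : D ∈ Div0 V) (v : V)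
    (h : ∀ y ≠ v, (G.lapMatrix ℤ *ᵥ x) y = D y) : G.lapMatrix ℤ *ᵥ x = D := by
  have hsum : ∑ y, (G.lapMatrix ℤ *ᵥ x) y = ∑ y, D y := by
    rw [sum_lapMatrix_mulVec]; exact hD.symm
  funext y
  rcases eq_or_ne y v with rfl | hy
  · rw [← add_sum_erase _ _ (mem_univ y), ← add_sum_erase _ _ (mem_univ y),
      sum_congr rfl fun z hz => h z (ne_of_mem_erase hz)] at hsum
    exact add_right_cancel hsum
  · exact h y hy

theorem divisorClass_eq_zero_iff {D : V → ℤ} (hD : D ∈ Div0 V) :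
    divisorClass G D hD = 0 ↔ D ∈ Prin G :=
  (QuotientAddGroup.eq_zero_iff _).trans AddSubgroup.mem_addSubgroupOf

theorem nsmul_divisorClass {D : V → ℤ} (hD : D ∈ Div0 V) (d : ℕ) :
    d • divisorClass G D hD = divisorClass G (d • D) (nsmul_mem hD d) := by
  induction d with
  | zero => simp only [zero_nsmul]; rfl
  | succ d ih => simp only [succ_nsmul, ih]; rfl

theorem nsmul_divisorClass_eq_zero_iff {D : V → ℤ} (hD : D ∈ Div0 V) (d : ℕ) :
    d • divisorClass G D hD = 0 ↔ ∃ x : V → ℤ, G.lapMatrix ℤ *ᵥ x = d • D := by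
  rw [nsmul_divisorClass, divisorClass_eq_zero_iff]
  exact AddMonoidHom.mem_range

end CriticalGroup

theorem eq_add_mul_sub_of_forall_add_eq_two_mul {R : Type*} [CommRing R] {f : ℕ → R} {m : ℕ}
    (h : ∀ t, t + 2 ≤ m → f t + f (t + 2) = 2 * f (t + 1)) {t : ℕ} (ht : t ≤ m) :
    f t = f 0 + t * (f 1 - f 0) := by
  induction t using Nat.twoStepInduction with
  | zero => simp
  | one => simp
  | more t ih₀ ih₁ =>
    rw [eq_sub_of_add_eq' (h t ht), ih₀ (by omega), ih₁ (by omega)]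
    push_cast
    ring

theorem natCast_sub_one_mul_add_sub_one {k : ℕ} (hk : 1 ≤ k) (n : ℕ) :
    (((k - 1) * (k + n - 1) : ℕ) : ℤ) = ((k : ℤ) - 1) * ((k : ℤ) + n - 1) := by
  push_cast [Nat.cast_sub hk, Nat.cast_sub (by omega : 1 ≤ k + n)]
  ring

namespace Hinge

variable {k n : ℕ}

/-- `branch i t` is the `t`-th vertex of the path `u, v_{i,1}, …, v_{i,k-2}, w`; every position
`t ≥ k - 1` gives `w`. -/
def branch (i : Fin n) : ℕ → HingeVertex k n
  | 0 => hu k n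
  | t + 1 => if h : t < k - 2 then hv k n i ⟨t, h⟩ else hw k n

theorem branch_succ (i : Fin n) (j : Fin (k - 2)) : branch i (j + 1) = hv k n i j := by
  simp [branch]

theorem branch_sub_one (hk : 2 ≤ k) (i : Fin n) : branch i (k - 1) = hw k n := by
  obtain ⟨t, rfl⟩ := Nat.exists_eq_add_of_le hk
  simp [branch, show 2 + t - 1 = t + 1 by omega]

theorem neighborFinset_hv (i : Fin n) (j : Fin (k - 2)) :
    (Hinge k n).neighborFinset (hv k n i j) = {branch i j, branch i (j + 2)} := by
  ext y
  rw [mem_neighborFinset]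
  rcases j with ⟨_ | j, hj⟩ <;> rcases y with a | ⟨i', j'⟩
  all_goals try fin_cases a
  all_goals simp [Hinge, hingeRelB, branch, hu, hw, hv]
  all_goals first | omega | (split_ifs <;> simp [Prod.ext_iff, Fin.ext_iff] <;> omega)

theorem branch_ne_branch_add_two (i : Fin n) (j : Fin (k - 2)) :
    (branch i j : HingeVertex k n) ≠ branch i (j + 2) := by
  rcases j with ⟨_ | j, hj⟩ <;> simp [branch, hu, hw, hv] <;> split_ifs <;> simp <;> omega

theorem neighborFinset_hu (hk : 3 ≤ k) :
    (Hinge k n).neighborFinset (hu k n) = insert (hw k n) (univ.image fun i => branch i 1) := by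
  ext y
  rw [mem_neighborFinset]
  rcases y with a | ⟨i', j'⟩
  all_goals try fin_cases a
  all_goals simp [Hinge, hingeRelB, branch, hu, hw, hv, show 0 < k - 2 by omega, Prod.ext_iff,
    Fin.ext_iff]
  omega

theorem lapMatrix_mulVec_branch {R : Type*} [NonAssocRing R] (x : HingeVertex k n → R)
    (i : Fin n) {j : ℕ} (hj : j < k - 2) :
    ((Hinge k n).lapMatrix R *ᵥ x) (branch i (j + 1)) =
      (x (branch i (j + 1)) - x (branch i j)) + (x (branch i (j + 1)) - x (branch i (j + 2))) := by
  rw [branch_succ i ⟨j, hj⟩, lapMatrix_mulVec_apply_eq_sum_sub, neighborFinset_hv,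
    sum_pair (branch_ne_branch_add_two i ⟨j, hj⟩)]

theorem lapMatrix_mulVec_hu {R : Type*} [NonAssocRing R] (hk : 3 ≤ k)
    (x : HingeVertex k n → R) :
    ((Hinge k n).lapMatrix R *ᵥ x) (hu k n) =
      (x (hu k n) - x (hw k n)) + ∑ i, (x (hu k n) - x (branch i 1)) := by
  have h1 (i : Fin n) : branch i 1 = hv k n i ⟨0, by omega⟩ := branch_succ i ⟨0, by omega⟩
  rw [lapMatrix_mulVec_apply_eq_sum_sub, neighborFinset_hu hk, sum_insert, sum_image]
  · intro i _ i' _ h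
    simpa [h1, hv] using h
  · simp [h1, hv, hw]

theorem pointDiff_hu_hv_apply_hu (i : Fin n) (j : Fin (k - 2)) :
    pointDiff (hu k n) (hv k n i j) (hu k n) = 1 := by
  simp [pointDiff, hu, hv]

theorem pointDiff_hu_hv_apply_branch (i i' : Fin n) (j : Fin (k - 2)) {t : ℕ}
    (ht : t < k - 2) :
    pointDiff (hu k n) (hv k n i j) (branch i' (t + 1)) = if i' = i ∧ t = j then -1 else 0 := by
  simp only [branch_succ i' ⟨t, ht⟩, pointDiff, hu, hv, reduceCtorEq, if_false, zero_sub,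
    Sum.inr.injEq, Prod.ext_iff, Fin.ext_iff]
  split_ifs <;> simp

def slope (k : ℕ) (i : Fin n) : Fin n → ℤ := 1 - Pi.single i ((k : ℤ) + n - 1)

def potential (k : ℕ) (i : Fin n) : HingeVertex k n → ℤ
  | Sum.inl a => if a = 0 then k - 1 else 0
  | Sum.inr (i', j) => slope k i i' * (k - 2 - j)

theorem potential_branch (hk : 2 ≤ k) (i i' : Fin n) {t : ℕ} (ht₀ : 0 < t) (ht : t ≤ k - 1) :
    potential k i (branch i' t) = slope k i i' * ((k : ℤ) - 1 - t) := by
  obtain ⟨t, rfl⟩ := Nat.exists_eq_add_of_lt ht₀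
  rcases Nat.lt_or_ge t (k - 2) with h | h
  · rw [zero_add, branch_succ i' ⟨t, h⟩]
    simp only [potential, hv]
    push_cast
    ring
  · have ht' : ((0 + t + 1 : ℕ) : ℤ) = k - 1 := by omega
    rw [ht', show 0 + t + 1 = k - 1 by omega, branch_sub_one hk]
    simp [potential, hw]

theorem lapMatrix_mulVec_potential_hu (hk : 3 ≤ k) (i : Fin n) :
    ((Hinge k n).lapMatrix ℤ *ᵥ potential k i) (hu k n) =
      ((k : ℤ) - 1) * ((k : ℤ) + n - 1) := by
  rw [lapMatrix_mulVec_hu hk,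
    sum_congr rfl fun i' _ => by rw [potential_branch (by omega) i i' one_pos (by omega)]]
  simp [slope, potential, hu, hw, sum_sub_distrib, ← sum_mul]
  ring

theorem lapMatrix_mulVec_potential_branch (hk : 3 ≤ k) (i i' : Fin n) {j : ℕ}
    (hj : j < k - 2) :
    ((Hinge k n).lapMatrix ℤ *ᵥ potential k i) (branch i' (j + 1)) =
      if i' = i ∧ j = 0 then -(((k : ℤ) - 1) * ((k : ℤ) + n - 1)) else 0 := by
  rw [lapMatrix_mulVec_branch _ _ hj, potential_branch (t := j + 1) (by omega) i i' (by omega)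
    (by omega), potential_branch (t := j + 2) (by omega) i i' (by omega) (by omega)]
  rcases j with _ | j
  · rcases eq_or_ne i' i with rfl | hi
    · simp [branch, potential, hu, slope]
      ring
    · simp [branch, potential, hu, slope, hi]
  · rw [potential_branch (by omega) i i' (by omega) (by omega), if_neg (by omega)]
    push_cast
    ring

theorem lapMatrix_mulVec_potential (hk : 3 ≤ k) (i : Fin n) :
    (Hinge k n).lapMatrix ℤ *ᵥ potential k i =
      ((k - 1) * (k + n - 1)) • pointDiff (hu k n) (hv k n i ⟨0, Nat.sub_pos_of_lt hk⟩) := by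
  have hcast := natCast_sub_one_mul_add_sub_one (by omega : 1 ≤ k) n
  refine lapMatrix_mulVec_eq_of_forall_ne _ (nsmul_mem (pointDiff_mem _ _) _) (hw k n) ?_
  rintro (a | ⟨i', ⟨j, hj⟩⟩) hy
  · obtain rfl : a = 0 := by
      by_contra ha
      exact hy (by simp [hw, show a = 1 by omega])
    refine (lapMatrix_mulVec_potential_hu hk i).trans ?_
    simp [pointDiff, hu, hv, hcast]
  · rw [show (Sum.inr (i', ⟨j, hj⟩) : HingeVertex k n) = branch i' (j + 1) from
      (branch_succ i' ⟨j, hj⟩).symm, Pi.smul_apply, pointDiff_hu_hv_apply_branch _ _ _ hj,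
      lapMatrix_mulVec_potential_branch hk i i' hj]
    split_ifs <;> simp [hcast]

theorem first_step_of_lapMatrix_mulVec_eq (hk : 3 ≤ k) (i i' : Fin n) {d : ℕ}
    {x : HingeVertex k n → ℤ}
    (hx : (Hinge k n).lapMatrix ℤ *ᵥ x =
      d • pointDiff (hu k n) (hv k n i ⟨0, Nat.sub_pos_of_lt hk⟩)) :
    ((k : ℤ) - 1) * (x (hu k n) - x (branch i' 1)) =
      (x (hu k n) - x (hw k n)) + ((k : ℤ) - 2) * (if i' = i then (d : ℤ) else 0) := by
  have hε (t : ℕ) (ht : t < k - 2) :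
      (x (branch i' (t + 1)) - x (branch i' t)) +
          (x (branch i' (t + 1)) - x (branch i' (t + 2))) =
        if i' = i ∧ t = 0 then -(d : ℤ) else 0 := by
    rw [← lapMatrix_mulVec_branch _ _ ht, hx, Pi.smul_apply,
      pointDiff_hu_hv_apply_branch _ _ _ ht]
    split_ifs <;> simp
  have hlin : x (branch i' (k - 2 + 1)) = x (branch i' 1) +
      ((k - 2 : ℕ) : ℤ) * (x (branch i' (1 + 1)) - x (branch i' 1)) :=
    eq_add_mul_sub_of_forall_add_eq_two_mul (f := fun t => x (branch i' (t + 1)))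
      (fun t ht => by linear_combination -(hε (t + 1) (by omega)).trans (if_neg (by omega)))
      le_rfl
  have h1 := hε 0 (by omega)
  rw [show branch i' 0 = hu k n from rfl] at h1
  rw [show k - 2 + 1 = k - 1 by omega, branch_sub_one (by omega)] at hlin
  push_cast [Nat.cast_sub (by omega : 2 ≤ k)] at hlin
  simp only [and_true] at h1
  split_ifs at h1 ⊢ <;> linear_combination hlin - ((k : ℤ) - 2) * h1

theorem dvd_of_lapMatrix_mulVec_eq (hk : 3 ≤ k) (hn : 2 ≤ n) (i : Fin n) {d : ℕ}
    {x : HingeVertex k n → ℤ}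
    (hx : (Hinge k n).lapMatrix ℤ *ᵥ x =
      d • pointDiff (hu k n) (hv k n i ⟨0, Nat.sub_pos_of_lt hk⟩)) :
    (k - 1) * (k + n - 1) ∣ d := by
  set s := x (hu k n) - x (hw k n)
  have hstep (i' : Fin n) := first_step_of_lapMatrix_mulVec_eq hk i i' hx
  have hu_eq : s + ∑ i', (x (hu k n) - x (branch i' 1)) = d := by
    rw [← lapMatrix_mulVec_hu hk, hx, Pi.smul_apply, pointDiff_hu_hv_apply_hu, nsmul_one]
  have hsum :
      ((k : ℤ) - 1) * ∑ i', (x (hu k n) - x (branch i' 1)) = n * s + ((k : ℤ) - 2) * d := by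
    rw [mul_sum, sum_congr rfl fun i' _ => hstep i', sum_add_distrib, sum_const, ← mul_sum,
      sum_ite_eq']
    simp [s]
  have hd : (d : ℤ) = ((k : ℤ) + n - 1) * s := by
    linear_combination hsum - ((k : ℤ) - 1) * hu_eq
  have : Nontrivial (Fin n) := Fin.nontrivial_iff_two_le.mpr hn
  obtain ⟨i₀, hi₀⟩ := exists_ne i
  have hs : s = ((k : ℤ) - 1) * (x (hu k n) - x (branch i₀ 1)) := by
    simpa [hi₀] using (hstep i₀).symm
  refine Int.natCast_dvd_natCast.mp ⟨x (hu k n) - x (branch i₀ 1), ?_⟩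
  rw [natCast_sub_one_mul_add_sub_one (by omega) n, hd, hs]
  ring

end Hinge

/-- For all integers `k ≥ 3`, `n ≥ 2` and any index `i`, the class of the
divisor `ε_i` (value `1` at `u`, `-1` at `v_{i,1}`, `0` elsewhere) in the critical group
`K(H_{k,n})` has additive order exactly `(k-1) * (k+n-1)`. -/
theorem hinge_epsilon_addOrderOf (k n : ℕ) (hk : 3 ≤ k) (hn : 2 ≤ n) (i : Fin n) :
    addOrderOf (divisorClass (Hinge k n)
      (pointDiff (hu k n) (hv k n i ⟨0, by omega⟩))
      (pointDiff_mem _ _)) = (k - 1) * (k + n - 1) := by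
  apply Nat.dvd_antisymm
  · exact addOrderOf_dvd_of_nsmul_eq_zero <| (nsmul_divisorClass_eq_zero_iff (Hinge k n) _ _).mpr
      ⟨Hinge.potential k i, Hinge.lapMatrix_mulVec_potential hk i⟩
  · obtain ⟨x, hx⟩ :=
      (nsmul_divisorClass_eq_zero_iff (Hinge k n) _ _).mp (addOrderOf_nsmul_eq_zero _)
    exact Hinge.dvd_of_lapMatrix_mulVec_eq hk hn i hx
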